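/- Let the message alphabet be binary, M = {0,1}, and consider a deterministic node-oblivious internal rule f: M^k → M whose dependence graph is not strongly connected, say with no edge from 0 to 1 (so that f(α) = 1 for every α ≠ (0, 0, …, 0)). Then for every node i at level τ and under either hypothesis s ∈ {0,1}, P(σ_i = 0 | s) ≤ exp(−c·k^τ) for some constant c > 0 (depending on the leaf rule and signal distributions), so that this probability tends to 0 doubly-exponentially in τ; consequently the root error probability P(σ_root ≠ s) is bounded away from 0 uniformly in t. -/

import Mathlib

/-!
Since the dependence graph has no edge from `0` to `1`, the only input on which `f` outputs `0`
is the all-zero vector. Hence `q_τ = P(σ = 0 | s)` at level `τ` satisfies `q_{τ+1} ≤ q_τ ^ k`,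
so `q_τ ≤ q_0 ^ (k ^ τ)` with `0 < q_0 < 1` because the leaf rule is non-constant and the
signal laws are positive. In particular `q_τ ≤ e^{-c}` at every level, so under both hypotheses
all children of the root send `1` with probability at least `(1 - e^{-c}) ^ k`; whatever the root
decides on that input, it errs under one of the two hypotheses.
-/

/-- `p` is an everywhere-positive probability distribution on the finite set `X`. -/
def IsPositiveDist {X : Type} [Fintype X] (p : X → ℝ) : Prop :=
  (∀ x, 0 < p x) ∧ ∑ x, p x = 1

/-- Message distribution at a node of level `τ` (distance `τ` from the leaves) for the
node-oblivious deterministic rule vector with leaf rule `g` and internal rule `f`,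
when the private signals are i.i.d. with law `p`. -/
noncomputable def oblDist {X M : Type} [Fintype X] [Fintype M] [DecidableEq M] {k : ℕ}
    (p : X → ℝ) (g : X → M) (f : (Fin k → M) → M) : ℕ → M → ℝ
  | 0, μ => ∑ x, if g x = μ then p x else 0
  | τ + 1, μ => ∑ σ : Fin k → M, if f σ = μ then ∏ i, oblDist p g f τ (σ i) else 0

/-- Root error probability `P(σ_root ≠ s)` (uniform prior on `s`) for the
node-oblivious protocol `(f, g, h)`; the root's children are at level `t`, so the
total depth is `t + 1` and there are `n = k^(t+1)` private signals. -/
noncomputable def oblErr {X M : Type} [Fintype X] [Fintype M] [DecidableEq M] {k : ℕ}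
    (p₀ p₁ : X → ℝ) (g : X → M) (f : (Fin k → M) → M) (h : (Fin k → M) → Bool)
    (t : ℕ) : ℝ :=
  (1 / 2) * (∑ σ : Fin k → M, if h σ = true then ∏ i, oblDist p₀ g f t (σ i) else 0) +
  (1 / 2) * (∑ σ : Fin k → M, if h σ = false then ∏ i, oblDist p₁ g f t (σ i) else 0)

/-- The dependence graph of `f`: there is a directed edge from `μ` to `ν` iff there is
an input vector `α ∈ Mᵏ` in which `ν` appears at least once and `f α = μ`. -/
def DepEdge {M : Type} {k : ℕ} (f : (Fin k → M) → M) (μ ν : M) : Prop :=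
  ∃ α : Fin k → M, (∃ i, α i = ν) ∧ f α = μ

/-- `HasPath f n μ ν`: the dependence graph of `f` contains a directed path with
exactly `n` edges from `μ` to `ν`. -/
def HasPath {M : Type} {k : ℕ} (f : (Fin k → M) → M) : ℕ → M → M → Prop
  | 0, μ, ν => μ = ν
  | n + 1, μ, ν => ∃ ξ, DepEdge f μ ξ ∧ HasPath f n ξ ν

/-- `d` is the diameter of the dependence graph of `f`: every ordered pair of distinct
vertices is joined by a directed path of length at most `d`, and some ordered pair of
distinct vertices has no directed path of length less than `d`. -/
def IsDiameter {M : Type} {k : ℕ} (f : (Fin k → M) → M) (d : ℕ) : Prop :=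
  (∀ μ ν : M, μ ≠ ν → ∃ n, n ≤ d ∧ HasPath f n μ ν) ∧
  (∃ μ ν : M, μ ≠ ν ∧ ∀ n, n < d → ¬HasPath f n μ ν)

section General

variable {X M : Type} [Fintype X] [Fintype M] [DecidableEq M] {k : ℕ}
  {p : X → ℝ} {g : X → M} {f : (Fin k → M) → M}

theorem oblDist_nonneg (hp : ∀ x, 0 ≤ p x) (τ : ℕ) (μ : M) : 0 ≤ oblDist p g f τ μ := by
  induction τ generalizing μ with
  | zero => exact Finset.sum_nonneg fun x _ => ite_nonneg (hp x) le_rfl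
  | succ τ ih =>
    exact Finset.sum_nonneg fun σ _ => ite_nonneg (Finset.prod_nonneg fun i _ => ih (σ i)) le_rfl

theorem sum_oblDist (hp : ∑ x, p x = 1) (τ : ℕ) : ∑ μ, oblDist p g f τ μ = 1 := by
  induction τ with
  | zero =>
    rw [← hp]
    simp only [oblDist]
    rw [Finset.sum_comm]
    simp
  | succ τ ih =>
    simp only [oblDist]
    rw [Finset.sum_comm, ← one_pow k, ← ih, Fintype.sum_pow]
    simp

theorem oblDist_zero_pos (hp : ∀ x, 0 < p x) {μ : M} (hμ : ∃ x, g x = μ) :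
    0 < oblDist p g f 0 μ := by
  obtain ⟨x, hx⟩ := hμ
  exact Finset.sum_pos' (fun y _ => ite_nonneg (hp y).le le_rfl)
    ⟨x, Finset.mem_univ x, by simp [hx, hp x]⟩

theorem oblDist_succ_le_pow {μ ν : M} (hp : ∀ x, 0 ≤ p x)
    (hf : ∀ α, f α = μ → α = fun _ => ν) (τ : ℕ) :
    oblDist p g f (τ + 1) μ ≤ oblDist p g f τ ν ^ k := by
  calc oblDist p g f (τ + 1) μ
      ≤ ∑ σ : Fin k → M, if σ = (fun _ => ν) then ∏ i, oblDist p g f τ (σ i) else 0 := by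
        refine Finset.sum_le_sum fun σ _ => ?_
        by_cases hσ : f σ = μ
        · obtain rfl := hf σ hσ
          simp [hσ]
        · simp only [hσ, if_false]
          exact ite_nonneg (Finset.prod_nonneg fun i _ => oblDist_nonneg hp τ (σ i)) le_rfl
    _ = oblDist p g f τ ν ^ k := by simp

theorem oblDist_le_pow_pow {μ : M} (hp : ∀ x, 0 ≤ p x)
    (hf : ∀ α, f α = μ → α = fun _ => μ) (τ : ℕ) :
    oblDist p g f τ μ ≤ oblDist p g f 0 μ ^ k ^ τ := by
  induction τ with
  | zero => simp
  | succ τ ih =>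
    calc oblDist p g f (τ + 1) μ ≤ oblDist p g f τ μ ^ k := oblDist_succ_le_pow hp hf τ
      _ ≤ (oblDist p g f 0 μ ^ k ^ τ) ^ k := pow_le_pow_left₀ (oblDist_nonneg hp τ μ) ih k
      _ = oblDist p g f 0 μ ^ k ^ (τ + 1) := by rw [← pow_mul, pow_succ]

theorem oblDist_le_exp {μ : M} (hp : ∀ x, 0 ≤ p x) (hf : ∀ α, f α = μ → α = fun _ => μ)
    {c : ℝ} (h₀ : oblDist p g f 0 μ ≤ Real.exp (-c)) (τ : ℕ) :
    oblDist p g f τ μ ≤ Real.exp (-c * (k : ℝ) ^ τ) := by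
  calc oblDist p g f τ μ ≤ oblDist p g f 0 μ ^ k ^ τ := oblDist_le_pow_pow hp hf τ
    _ ≤ Real.exp (-c) ^ k ^ τ := pow_le_pow_left₀ (oblDist_nonneg hp 0 μ) h₀ _
    _ = Real.exp (-c * (k : ℝ) ^ τ) := by rw [← Real.exp_nat_mul, mul_comm]; push_cast; rfl

theorem prod_oblDist_le_sum_ite (hp : ∀ x, 0 ≤ p x) (h : (Fin k → M) → Bool) {b : Bool}
    (t : ℕ) {σ₀ : Fin k → M} (hσ₀ : h σ₀ = b) :
    ∏ i, oblDist p g f t (σ₀ i) ≤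
      ∑ σ : Fin k → M, if h σ = b then ∏ i, oblDist p g f t (σ i) else 0 := by
  have := Finset.single_le_sum
    (f := fun σ : Fin k → M => if h σ = b then ∏ i, oblDist p g f t (σ i) else 0)
    (fun σ _ => ite_nonneg (Finset.prod_nonneg fun i _ => oblDist_nonneg hp t (σ i)) le_rfl)
    (Finset.mem_univ σ₀)
  simpa [hσ₀] using this

theorem min_prod_oblDist_div_two_le_oblErr {p₀ p₁ : X → ℝ} (hp₀ : ∀ x, 0 ≤ p₀ x)
    (hp₁ : ∀ x, 0 ≤ p₁ x) (h : (Fin k → M) → Bool) (t : ℕ) (σ₀ : Fin k → M) :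
    min (∏ i, oblDist p₀ g f t (σ₀ i)) (∏ i, oblDist p₁ g f t (σ₀ i)) / 2 ≤
      oblErr p₀ p₁ g f h t := by
  have hsum_nonneg : ∀ {p : X → ℝ}, (∀ x, 0 ≤ p x) → ∀ b : Bool,
      0 ≤ ∑ σ : Fin k → M, if h σ = b then ∏ i, oblDist p g f t (σ i) else 0 :=
    fun hp b => Finset.sum_nonneg fun σ _ =>
      ite_nonneg (Finset.prod_nonneg fun i _ => oblDist_nonneg hp t (σ i)) le_rfl
  unfold oblErr
  cases hσ₀ : h σ₀
  · have := prod_oblDist_le_sum_ite hp₁ h t hσ₀ (g := g) (f := f)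
    have := hsum_nonneg hp₀ true
    have := min_le_right (∏ i, oblDist p₀ g f t (σ₀ i)) (∏ i, oblDist p₁ g f t (σ₀ i))
    linarith
  · have := prod_oblDist_le_sum_ite hp₀ h t hσ₀ (g := g) (f := f)
    have := hsum_nonneg hp₁ false
    have := min_le_left (∏ i, oblDist p₀ g f t (σ₀ i)) (∏ i, oblDist p₁ g f t (σ₀ i))
    linarith

end General

theorem exists_apply_eq_of_apply_ne {α : Type*} {g : α → Bool} {x y : α} (hxy : g x ≠ g y)
    (b : Bool) : ∃ z, g z = b := by
  by_cases hx : g x = b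
  · exact ⟨x, hx⟩
  · refine ⟨y, ?_⟩
    generalize g x = u at hx hxy
    cases b <;> cases u <;> simp_all

section Binary

variable {X : Type} [Fintype X] {k : ℕ} {g : X → Bool} {f : (Fin k → Bool) → Bool}

theorem eq_const_false_of_not_depEdge (hedge : ¬DepEdge f false true) {α : Fin k → Bool}
    (hα : f α = false) : α = fun _ => false :=
  funext fun i => Bool.eq_false_iff.2 fun hi => hedge ⟨α, ⟨i, hi⟩, hα⟩

theorem oblDist_true_eq {p : X → ℝ} (hp : ∑ x, p x = 1) (τ : ℕ) :
    oblDist p g f τ true = 1 - oblDist p g f τ false := by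
  have := sum_oblDist (g := g) (f := f) hp τ
  rw [Fintype.sum_bool] at this
  linarith

theorem oblDist_zero_false_mem_Ioo {p : X → ℝ} (hp : IsPositiveDist p)
    (hg : ∃ x y, g x ≠ g y) : oblDist p g f 0 false ∈ Set.Ioo 0 1 := by
  obtain ⟨x, y, hxy⟩ := hg
  have htrue := oblDist_zero_pos (f := f) hp.1 (exists_apply_eq_of_apply_ne hxy true)
  exact ⟨oblDist_zero_pos hp.1 (exists_apply_eq_of_apply_ne hxy false), by
    linarith [oblDist_true_eq (g := g) (f := f) hp.2 0]⟩

theorem pow_div_two_le_oblErr {p₀ p₁ : X → ℝ} (hp₀ : IsPositiveDist p₀)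
    (hp₁ : IsPositiveDist p₁) (h : (Fin k → Bool) → Bool) {t : ℕ} {q : ℝ} (hq : q ≤ 1)
    (h₀ : oblDist p₀ g f t false ≤ q) (h₁ : oblDist p₁ g f t false ≤ q) :
    (1 - q) ^ k / 2 ≤ oblErr p₀ p₁ g f h t := by
  have hpow : ∀ {p : X → ℝ}, IsPositiveDist p → oblDist p g f t false ≤ q →
      (1 - q) ^ k ≤ ∏ _i : Fin k, oblDist p g f t true := fun hp hpq => by
    rw [Finset.prod_const, Finset.card_univ, Fintype.card_fin, oblDist_true_eq hp.2]
    exact pow_le_pow_left₀ (sub_nonneg.2 hq) (by linarith) k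
  calc (1 - q) ^ k / 2
      ≤ min (∏ _i : Fin k, oblDist p₀ g f t true) (∏ _i : Fin k, oblDist p₁ g f t true) / 2 := by
        gcongr
        exact le_min (hpow hp₀ h₀) (hpow hp₁ h₁)
    _ ≤ oblErr p₀ p₁ g f h t :=
        min_prod_oblDist_div_two_le_oblErr (fun x => (hp₀.1 x).le) (fun x => (hp₁.1 x).le) h t
          fun _ => true

end Binary

/-- **Failure of strong connectivity for binary messages.**  Let the message alphabet
be binary (`M = Bool`, with `0 = false` and `1 = true`) and consider a deterministic
node-oblivious rule vector `(f, g, h)` with non-constant leaf rule `g` and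
everywhere-positive signal distributions, such that the dependence graph of `f` has no
edge from `0` to `1`.  Then:
(a) `f α = 1` for every `α ≠ (0, …, 0)`;
(b) there is a constant `c > 0` (depending on the leaf rule and the signal
distributions) such that for every level `τ` and under either hypothesis `s`,
`P(σ_i = 0 | s) ≤ exp (-c k^τ)` — so this probability tends to `0`
doubly-exponentially in `τ`; and
(c) consequently the root error probability is bounded away from `0` uniformly in the
depth. -/
theorem binary_not_strongly_connected_error_bounded_away
    (X : Type) [Fintype X] {k : ℕ} (hk : 1 ≤ k)
    (p₀ p₁ : X → ℝ) (hp₀ : IsPositiveDist p₀) (hp₁ : IsPositiveDist p₁)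
    (g : X → Bool) (hg : ∃ x y, g x ≠ g y)
    (f : (Fin k → Bool) → Bool) (h : (Fin k → Bool) → Bool)
    (hedge : ¬DepEdge f false true) :
    (∀ α : Fin k → Bool, α ≠ (fun _ => false) → f α = true) ∧
    (∃ c : ℝ, 0 < c ∧ ∀ τ : ℕ, ∀ s : Bool,
      oblDist (if s then p₁ else p₀) g f τ false ≤ Real.exp (-c * (k : ℝ) ^ τ)) ∧
    (∃ ε : ℝ, 0 < ε ∧ ∀ t : ℕ, ε ≤ oblErr p₀ p₁ g f h t) := by
  have hfalse : ∀ α, f α = false → α = fun _ => false := fun _ =>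
    eq_const_false_of_not_depEdge hedge
  obtain ⟨hq₀_pos, hq₀_lt⟩ := oblDist_zero_false_mem_Ioo (f := f) hp₀ hg
  obtain ⟨hq₁_pos, hq₁_lt⟩ := oblDist_zero_false_mem_Ioo (f := f) hp₁ hg
  set q := max (oblDist p₀ g f 0 false) (oblDist p₁ g f 0 false)
  have hq_pos : 0 < q := lt_max_of_lt_left hq₀_pos
  have hq_lt : q < 1 := max_lt hq₀_lt hq₁_lt
  set c := -Real.log q
  have hc : 0 < c := neg_pos.2 (Real.log_neg hq_pos hq_lt)
  have hexp : Real.exp (-c) = q := by rw [neg_neg, Real.exp_log hq_pos]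
  have hbound₀ :=
    oblDist_le_exp (fun x => (hp₀.1 x).le) hfalse ((le_max_left _ _).trans_eq hexp.symm)
  have hbound₁ :=
    oblDist_le_exp (fun x => (hp₁.1 x).le) hfalse ((le_max_right _ _).trans_eq hexp.symm)
  have hk_pow : ∀ t : ℕ, (1 : ℝ) ≤ (k : ℝ) ^ t := fun _ => one_le_pow₀ (by exact_mod_cast hk)
  have hexp_le : ∀ t : ℕ, Real.exp (-c * (k : ℝ) ^ t) ≤ q := fun t =>
    (Real.exp_le_exp.2 (by nlinarith [hk_pow t])).trans_eq hexp
  refine ⟨fun α hα => Bool.eq_true_of_not_eq_false fun hα' => hα (hfalse α hα'),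
    ⟨c, hc, fun τ s => ?_⟩, ⟨(1 - q) ^ k / 2, by have := sub_pos.2 hq_lt; positivity, fun t => ?_⟩⟩
  · cases s
    exacts [hbound₀ τ, hbound₁ τ]
  · exact pow_div_two_le_oblErr hp₀ hp₁ h hq_lt.le ((hbound₀ t).trans (hexp_le t))
      ((hbound₁ t).trans (hexp_le t))
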